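/- In a positive T-diagram in which every arrow has a well-defined level, if L is a nontrivial loop that respects the circle's orientation, then L meets at least one marking. (This is the 'if' direction of the level criterion, provable by taking a lowest-level arrow among those used by the loop.) -/

import Mathlib

/-!
Let `a` be an arrow of lowest level among those used by the loop, and let the loop jump along `a`
from its endpoint `q`. Since the loop is reduced, it arrives at `q` along an arc. Walking backwards
from `q`, every point met before the marking that precedes `q` is an endpoint of an arrow of lower
level, which the loop does not use; so the loop keeps running backwards along the circle until it
crosses that marking. A loop that uses no arrow winds around the whole circle.
-/

/-- A Gauss diagram with `n` arrows: the `2n` arrow endpoints are the points of the cyclic group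
`ZMod (2*n)` (listed in the cyclic order of the oriented circle), and arrow `a` points from its
underpass point `tail a` to its overpass point `head a`.  The edge `e` of the diagram is the arc
of the circle from the point `e` to the point `e + 1`. -/
structure GaussDiagram (n : ℕ) where
  head : Fin n → ZMod (2 * n)
  tail : Fin n → ZMod (2 * n)
  inj : Function.Injective (Sum.elim head tail)

namespace GaussDiagram

variable {n : ℕ}

/-- The edge-characteristic vector of the distinguished loop of arrow `a`: it traverses the
edges from `head a` to `tail a` along the orientation of the circle (and returns along the
arrow). -/
def arcChain (G : GaussDiagram n) (a : Fin n) : ZMod (2 * n) → ℤ :=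
  fun e => if (e - G.head a).val < (G.tail a - G.head a).val then 1 else 0

/-- The `(n+1) × 2n` matrix whose rows are the edge-characteristic vectors of the `n`
distinguished loops together with the full circle (the all-ones row, indexed by `none`). -/
def loopMatrix (G : GaussDiagram n) : Matrix (Option (Fin n)) (ZMod (2 * n)) ℤ :=
  fun r e => r.elim 1 fun a => G.arcChain a e

/-- The elementary refinement move of type II+ at arrow `a`: add `+1` on the edge directly
following each endpoint of `a` and `-1` on the edge directly preceding it (with multiplicity). -/
def moveVec (G : GaussDiagram n) (a : Fin n) : ZMod (2 * n) → ℤ :=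
  fun e => (if e = G.head a then 1 else 0) + (if e = G.tail a then 1 else 0)
    - (if e = G.head a - 1 then 1 else 0) - (if e = G.tail a - 1 then 1 else 0)

/-- The edge `e` (from point `e` to point `e+1`) is adjacent to the arrow `a` if one of its two
boundary points is an endpoint of `a`. -/
def adjacent (G : GaussDiagram n) (e : ZMod (2 * n)) (a : Fin n) : Prop :=
  e = G.head a ∨ e + 1 = G.head a ∨ e = G.tail a ∨ e + 1 = G.tail a

end GaussDiagram

/-- A move of a loop in a Gauss diagram: either follow the next edge of the circle in the
direction of its orientation (`circ`), or jump along an arrow, in either direction. -/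
inductive Move (n : ℕ) where
  | circ : Move n
  | jumpHT : Fin n → Move n
  | jumpTH : Fin n → Move n

/-- Whether a move is a jump along an arrow. -/
def Move.isJump {n : ℕ} : Move n → Prop
  | .circ => False
  | _ => True

namespace GaussDiagram

/-- The point reached by performing one move starting at the point `p`. -/
def target (G : GaussDiagram n) (p : ZMod (2 * n)) : Move n → ZMod (2 * n)
  | .circ => p + 1
  | .jumpHT a => G.tail a
  | .jumpTH a => G.head a

/-- Validity of a sequence of moves starting at `p`: a jump along an arrow may only be performed
from an endpoint of that arrow. -/
def validFrom (G : GaussDiagram n) : ZMod (2 * n) → List (Move n) → Prop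
  | _, [] => True
  | p, mv :: r =>
      (match mv with
        | .circ => True
        | .jumpHT a => p = G.head a
        | .jumpTH a => p = G.tail a) ∧ validFrom G (G.target p mv) r

/-- The point reached after performing a sequence of moves from `p`. -/
def run (G : GaussDiagram n) : ZMod (2 * n) → List (Move n) → ZMod (2 * n)
  | p, [] => p
  | p, mv :: r => run G (G.target p mv) r

/-- A loop in the Gauss diagram which respects the orientation of the circle: a closed valid
sequence of moves (circle arcs are always traversed in the orientation direction, arrows may be
traversed both ways). -/
structure Loop (G : GaussDiagram n) where
  start : ZMod (2 * n)
  moves : List (Move n)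
  valid : G.validFrom start moves
  closed : G.run start moves = start

/-- A loop is *reduced* (nontrivial) if it is nonempty and never backtracks: no two cyclically
consecutive moves are jumps (two consecutive jumps necessarily cancel along the same arrow). -/
def Loop.Reduced {G : GaussDiagram n} (L : Loop G) : Prop :=
  L.moves ≠ [] ∧
  L.moves.Chain' (fun m₁ m₂ => ¬(m₁.isJump ∧ m₂.isJump)) ∧
  ∀ m₁ ∈ L.moves.getLast?, ∀ m₂ ∈ L.moves.head?, ¬(m₁.isJump ∧ m₂.isJump)

/-- Whether a sequence of moves from `p` meets a marking of the marking function `m` (which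
records the number of (positive) markings on each edge). -/
def meetsFrom (G : GaussDiagram n) (m : ZMod (2 * n) → ℕ) :
    ZMod (2 * n) → List (Move n) → Prop
  | _, [] => False
  | p, .circ :: r => 0 < m p ∨ meetsFrom G m (p + 1) r
  | _, .jumpHT a :: r => meetsFrom G m (G.tail a) r
  | _, .jumpTH a :: r => meetsFrom G m (G.head a) r

/-- A loop meets a marking if one of the circle arcs it traverses carries a marking. -/
def Loop.Meets {G : GaussDiagram n} (m : ZMod (2 * n) → ℕ) (L : Loop G) : Prop :=
  G.meetsFrom m L.start L.moves

/-- In the diagram obtained by deleting the arrows of `R`, the point `p` is directly preceded by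
a marking: going backwards along the circle from `p` one finds a marking before meeting any
endpoint of a non-deleted arrow. -/
def precededBy (G : GaussDiagram n) (m : ZMod (2 * n) → ℕ) (R : Set (Fin n))
    (p : ZMod (2 * n)) : Prop :=
  ∃ j : ℕ, 0 < m (p - 1 - (j : ZMod (2 * n))) ∧
    ∀ i < j, ∃ a ∈ R, G.head a = p - 1 - (i : ZMod (2 * n)) ∨
      G.tail a = p - 1 - (i : ZMod (2 * n))

/-- The set of arrows removed after `k` rounds of deleting the arrows of level `1` (those whose
two endpoints are both directly preceded by a marking in the current diagram). -/
def removedAt (G : GaussDiagram n) (m : ZMod (2 * n) → ℕ) : ℕ → Set (Fin n)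
  | 0 => ∅
  | k + 1 => removedAt G m k ∪
      {a | G.precededBy m (removedAt G m k) (G.head a) ∧
           G.precededBy m (removedAt G m k) (G.tail a)}

/-- An arrow has a well-defined level if it is eventually deleted in the level process. -/
def HasLevel (G : GaussDiagram n) (m : ZMod (2 * n) → ℕ) (a : Fin n) : Prop :=
  ∃ k, a ∈ G.removedAt m k

/-- The number of times a sequence of moves from `p` traverses each edge of the circle. -/
def edgeCount (G : GaussDiagram n) : ZMod (2 * n) → List (Move n) → ZMod (2 * n) → ℤ
  | _, [] => 0
  | p, .circ :: r => fun e => (if e = p then 1 else 0) + edgeCount G (p + 1) r e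
  | _, .jumpHT a :: r => edgeCount G (G.tail a) r
  | _, .jumpTH a :: r => edgeCount G (G.head a) r

/-- The net number of traversals of each arrow, counted positively in the tail-to-head
direction (the direction used by the distinguished loops). -/
def netJump {n : ℕ} : List (Move n) → Fin n → ℤ
  | [] => 0
  | .circ :: r => netJump r
  | .jumpHT a :: r => fun b => netJump r b - (if b = a then 1 else 0)
  | .jumpTH a :: r => fun b => (if b = a then 1 else 0) + netJump r b

/-- `y` is a refinement of the decorated Gauss diagram with arrow valuations `dA` and circle
valuation `d`: the sum of the markings along each distinguished loop is the corresponding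
valuation, and the total sum is the valuation of the circle. -/
def IsRefinement [NeZero (2 * n)] (G : GaussDiagram n) (dA : Fin n → ℤ) (d : ℤ)
    (y : ZMod (2 * n) → ℤ) : Prop :=
  (∀ a, ∑ e, G.arcChain a e * y e = dA a) ∧ ∑ e, y e = d

/-- The homology class in `H₁(ℝ × S¹) = ℤ` of a loop of the decorated Gauss diagram with arrow
valuations `dA` and circle valuation `d`, computed by expressing the cycle of the loop in the
basis formed by the distinguished loops and the circle. -/
def loopClass [NeZero (2 * n)] (G : GaussDiagram n) (dA : Fin n → ℤ) (d : ℤ)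
    (L : Loop G) : ℤ :=
  ∑ a, netJump L.moves a * dA a +
    (G.edgeCount L.start L.moves 0 - ∑ a, netJump L.moves a * G.arcChain a 0) * d

end GaussDiagram

theorem Move.eq_circ_of_not_isJump {n : ℕ} {mv : Move n} (h : ¬mv.isJump) : mv = .circ := by
  cases mv
  · rfl
  all_goals exact absurd trivial h

namespace GaussDiagram

variable {n : ℕ} (G : GaussDiagram n) (m : ZMod (2 * n) → ℕ)

def IsEndpoint (b : Fin n) (p : ZMod (2 * n)) : Prop :=
  G.head b = p ∨ G.tail b = p

variable {G} in
theorem IsEndpoint.eq {b c : Fin n} {p : ZMod (2 * n)} (hb : G.IsEndpoint b p)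
    (hc : G.IsEndpoint c p) : b = c := by
  rcases hb with rfl | rfl <;> rcases hc with h | h
  · simpa using G.inj (a₁ := .inl b) (a₂ := .inl c) h.symm
  · simpa using G.inj (a₁ := .inl b) (a₂ := .inr c) h.symm
  · simpa using G.inj (a₁ := .inr b) (a₂ := .inl c) h.symm
  · simpa using G.inj (a₁ := .inr b) (a₂ := .inr c) h.symm

def jumpArrows (l : List (Move n)) : Set (Fin n) :=
  {b | Move.jumpHT b ∈ l ∨ Move.jumpTH b ∈ l}

theorem jumpArrows_mono {l l' : List (Move n)} (h : l ⊆ l') : jumpArrows l ⊆ jumpArrows l' :=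
  fun _ hb => hb.imp (@h _) (@h _)

@[simp]
theorem jumpArrows_append_circ (l : List (Move n)) : jumpArrows (l ++ [.circ]) = jumpArrows l := by
  ext b
  simp [jumpArrows]

theorem jumpArrows_nonempty {l : List (Move n)} (h : ¬∀ mv ∈ l, mv = .circ) :
    (jumpArrows l).Nonempty := by
  by_contra hempty
  refine h fun mv hmv => ?_
  cases mv with
  | circ => rfl
  | jumpHT b => exact absurd ⟨b, .inl hmv⟩ hempty
  | jumpTH b => exact absurd ⟨b, .inr hmv⟩ hempty

theorem run_append (p : ZMod (2 * n)) (l₁ l₂ : List (Move n)) :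
    G.run p (l₁ ++ l₂) = G.run (G.run p l₁) l₂ := by
  induction l₁ generalizing p with
  | nil => rfl
  | cons mv r ih => exact ih _

theorem run_append_singleton (p : ZMod (2 * n)) (l : List (Move n)) (mv : Move n) :
    G.run p (l ++ [mv]) = G.target (G.run p l) mv :=
  G.run_append p l [mv]

theorem meetsFrom_append (p : ZMod (2 * n)) (l₁ l₂ : List (Move n)) :
    G.meetsFrom m p (l₁ ++ l₂) ↔ G.meetsFrom m p l₁ ∨ G.meetsFrom m (G.run p l₁) l₂ := by
  induction l₁ generalizing p with
  | nil => simp [meetsFrom, run]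
  | cons mv r ih => cases mv <;> simp [meetsFrom, run, target, ih, or_assoc]

theorem meetsFrom_append_circ (p : ZMod (2 * n)) (l : List (Move n)) :
    G.meetsFrom m p (l ++ [.circ]) ↔ G.meetsFrom m p l ∨ 0 < m (G.run p l) := by
  simp [meetsFrom_append, meetsFrom]

theorem validFrom_append (p : ZMod (2 * n)) (l₁ l₂ : List (Move n)) :
    G.validFrom p (l₁ ++ l₂) ↔ G.validFrom p l₁ ∧ G.validFrom (G.run p l₁) l₂ := by
  induction l₁ generalizing p with
  | nil => simp [validFrom, run]
  | cons mv r ih => cases mv <;> simp [validFrom, run, ih, and_assoc]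

section Closed

variable {p : ZMod (2 * n)} {l₁ l₂ : List (Move n)}

theorem run_rotate (h : G.run p (l₁ ++ l₂) = p) :
    G.run (G.run p l₁) (l₂ ++ l₁) = G.run p l₁ := by
  rw [run_append, ← run_append G p l₁ l₂, h]

theorem meetsFrom_rotate (h : G.run p (l₁ ++ l₂) = p) :
    G.meetsFrom m (G.run p l₁) (l₂ ++ l₁) ↔ G.meetsFrom m p (l₁ ++ l₂) := by
  rw [meetsFrom_append, meetsFrom_append, ← run_append, h, or_comm]

theorem run_flatten_replicate (h : G.run p l₁ = p) (k : ℕ) :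
    G.run p (List.replicate k l₁).flatten = p := by
  induction k with
  | zero => rfl
  | succ k ih => rw [List.replicate_succ, List.flatten_cons, run_append, h, ih]

theorem meetsFrom_of_flatten_replicate (h : G.run p l₁ = p) {k : ℕ}
    (hk : G.meetsFrom m p (List.replicate k l₁).flatten) : G.meetsFrom m p l₁ := by
  induction k with
  | zero => exact hk.elim
  | succ k ih =>
    rw [List.replicate_succ, List.flatten_cons, meetsFrom_append, h] at hk
    exact hk.elim id ih

end Closed

theorem run_of_forall_circ (p : ZMod (2 * n)) {l : List (Move n)}
    (h : ∀ mv ∈ l, mv = .circ) : G.run p l = p + l.length := by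
  induction l generalizing p with
  | nil => simp [run]
  | cons mv r ih =>
    obtain rfl := h mv List.mem_cons_self
    rw [run, ih _ fun x hx => h x (List.mem_cons_of_mem _ hx)]
    simp only [target, List.length_cons, Nat.cast_succ]
    ring

theorem meetsFrom_of_forall_circ {p : ZMod (2 * n)} {l : List (Move n)}
    (h : ∀ mv ∈ l, mv = .circ) {i : ℕ} (hi : i < l.length) (hmi : 0 < m (p + i)) :
    G.meetsFrom m p l := by
  induction l generalizing p i with
  | nil => simp at hi
  | cons mv r ih =>
    obtain rfl := h mv List.mem_cons_self
    cases i with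
    | zero => exact .inl (by simpa using hmi)
    | succ i =>
      refine .inr (ih (fun x hx => h x (List.mem_cons_of_mem _ hx)) (by simpa using hi) ?_)
      convert hmi using 2
      push_cast
      ring

/-- Read backwards from its end, the walk cannot leave the circle at a point that is not an
endpoint of an arrow of `A`. -/
theorem meetsFrom_append_circ_of_marked {A : Set (Fin n)} (j : ℕ) {s : ZMod (2 * n)}
    {ms : List (Move n)} (hlen : j ≤ ms.length) (hA : jumpArrows ms ⊆ A)
    (hfree : ∀ i < j, ∀ b ∈ A, ¬G.IsEndpoint b (G.run s ms - i))
    (hmark : 0 < m (G.run s ms - j)) : G.meetsFrom m s (ms ++ [.circ]) := by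
  induction j generalizing ms with
  | zero => exact (G.meetsFrom_append_circ m s ms).2 (.inr (by simpa using hmark))
  | succ j ih =>
    obtain ⟨ms, mv, rfl⟩ : ∃ ms' mv, ms = ms' ++ [mv] := by
      rcases ms.eq_nil_or_concat' with rfl | h
      · simp at hlen
      · exact h
    have hcirc : mv = .circ := by
      cases mv with
      | circ => rfl
      | jumpHT b =>
        exact absurd (.inr (by simp [run_append_singleton, target]))
          (hfree 0 (by omega) b (hA (.inl (by simp))))
      | jumpTH b =>
        exact absurd (.inl (by simp [run_append_singleton, target]))
          (hfree 0 (by omega) b (hA (.inr (by simp))))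
    subst hcirc
    have hrun : G.run s (ms ++ [.circ]) = G.run s ms + 1 := G.run_append_singleton _ _ _
    rw [meetsFrom_append]
    refine .inl (ih (by simpa using hlen) (by simpa using hA) (fun i hi b hb => ?_) ?_)
    · convert hfree (i + 1) (by omega) b hb using 2
      rw [hrun]
      push_cast
      ring
    · convert hmark using 2
      rw [hrun]
      push_cast
      ring

theorem meetsFrom_of_precededBy {R : Set (Fin n)} {q : ZMod (2 * n)} {v : List (Move n)}
    (hclosed : G.run q (v ++ [.circ]) = q) (hpre : G.precededBy m R q)
    (hdisj : Disjoint (jumpArrows v) R) : G.meetsFrom m q (v ++ [.circ]) := by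
  obtain ⟨j, hmark, hcov⟩ := hpre
  have hv : G.run q v = q - 1 := by
    rw [G.run_append_singleton] at hclosed
    exact eq_sub_of_add_eq hclosed
  -- Going around the loop `j` extra times makes the backward walk long enough.
  set ms := (List.replicate j (v ++ [.circ])).flatten ++ v
  have hms : G.run q ms = q - 1 := by rw [G.run_append, G.run_flatten_replicate hclosed, hv]
  have hsub : ms ⊆ v ++ [.circ] := by
    refine List.append_subset.2 ⟨fun x hx => ?_, List.subset_append_left _ _⟩
    simp only [List.mem_flatten, List.mem_replicate] at hx
    obtain ⟨l, ⟨-, rfl⟩, hx⟩ := hx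
    exact hx
  have hwalk : G.meetsFrom m q (ms ++ [.circ]) := by
    refine G.meetsFrom_append_circ_of_marked m (A := jumpArrows v) j ?_
      (by simpa using jumpArrows_mono hsub) (fun i hi b hb hend => ?_) (by rwa [hms])
    · simp only [ms, List.length_append, List.length_flatten, List.map_replicate,
        List.sum_replicate, smul_eq_mul, List.length_singleton]
      nlinarith
    · obtain ⟨c, hcR, hc⟩ := hcov i hi
      rw [hms] at hend
      exact Set.disjoint_left.1 hdisj hb (hend.eq hc ▸ hcR)
  rw [List.append_assoc, meetsFrom_append, G.run_flatten_replicate hclosed] at hwalk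
  exact hwalk.elim (G.meetsFrom_of_flatten_replicate m hclosed) id

theorem exists_precededBy_of_hasLevel {S : Set (Fin n)} (hS : S.Nonempty)
    (hlev : ∀ a ∈ S, G.HasLevel m a) :
    ∃ k, Disjoint S (G.removedAt m k) ∧ ∃ a ∈ S, G.precededBy m (G.removedAt m k) (G.head a) ∧
      G.precededBy m (G.removedAt m k) (G.tail a) := by
  classical
  have hex : ∃ k, ∃ a ∈ S, a ∈ G.removedAt m k :=
    let ⟨a, ha⟩ := hS
    let ⟨k, hk⟩ := hlev a ha
    ⟨k, a, ha, hk⟩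
  obtain ⟨a, haS, hak⟩ := Nat.find_spec hex
  obtain ⟨k, hk⟩ : ∃ k, Nat.find hex = k + 1 :=
    Nat.exists_eq_succ_of_ne_zero fun h => by simp [h, removedAt] at hak
  have hdisj : Disjoint S (G.removedAt m k) :=
    Set.disjoint_left.2 fun b hb hbk => Nat.find_min hex (by omega) ⟨b, hb, hbk⟩
  rw [hk] at hak
  exact ⟨k, hdisj, a, haS, hak.resolve_left (Set.disjoint_left.1 hdisj haS)⟩

namespace Loop

variable {G}

theorem Reduced.exists_eq_append_circ {L : Loop G} (hL : L.Reduced) {l₁ l₂ : List (Move n)}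
    {mv : Move n} (hsplit : L.moves = l₁ ++ mv :: l₂) (hmv : mv.isJump) :
    ∃ w, l₂ ++ l₁ = w ++ [.circ] := by
  obtain ⟨-, hchain, hcyc⟩ := hL
  suffices h : ∃ w x, l₂ ++ l₁ = w ++ [x] ∧ ¬x.isJump by
    obtain ⟨w, x, h, hx⟩ := h
    exact ⟨w, by rw [h, Move.eq_circ_of_not_isJump hx]⟩
  rcases l₁.eq_nil_or_concat' with rfl | ⟨l₁, x, rfl⟩
  · rcases l₂.eq_nil_or_concat' with rfl | ⟨l₂, x, rfl⟩
    · exact absurd ⟨hmv, hmv⟩ (hcyc mv (by simp [hsplit]) mv (by simp [hsplit]))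
    · have hsplit' : L.moves = (mv :: l₂) ++ [x] := hsplit
      refine ⟨l₂, x, by simp, fun hx => hcyc x ?_ mv (by simp [hsplit]) ⟨hx, hmv⟩⟩
      rw [hsplit', List.getLast?_concat]
      exact Option.mem_some_self x
  · rw [hsplit] at hchain
    exact ⟨l₂ ++ l₁, x, by simp,
      fun hx => (List.isChain_append.1 hchain).2.2 x (by simp) mv (by simp) ⟨hx, hmv⟩⟩

theorem meets_of_forall_circ (L : Loop G) (hne : L.moves ≠ [])
    (hcirc : ∀ mv ∈ L.moves, mv = .circ) {e : ZMod (2 * n)} (he : 0 < m e) : L.Meets m := by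
  have hlen : ((L.moves.length : ℕ) : ZMod (2 * n)) = 0 := by
    have := L.closed
    rwa [G.run_of_forall_circ _ hcirc, add_eq_left] at this
  have hdvd := (ZMod.natCast_eq_zero_iff _ _).1 hlen
  have hpos := List.length_pos_iff.2 hne
  have : NeZero (2 * n) := ⟨fun h => by rw [h, zero_dvd_iff] at hdvd; omega⟩
  refine G.meetsFrom_of_forall_circ m hcirc
    ((ZMod.val_lt (e - L.start)).trans_le (Nat.le_of_dvd hpos hdvd)) ?_
  rwa [ZMod.natCast_zmod_val, add_sub_cancel]

theorem meets_of_precededBy {L : Loop G} (hL : L.Reduced) {R : Set (Fin n)} {a : Fin n}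
    (ha : a ∈ jumpArrows L.moves) (hdisj : Disjoint (jumpArrows L.moves) R)
    (hhead : G.precededBy m R (G.head a)) (htail : G.precededBy m R (G.tail a)) : L.Meets m := by
  obtain ⟨mv, hmv, hjump, hsrc⟩ : ∃ mv ∈ L.moves, mv.isJump ∧
      ∀ p r, G.validFrom p (mv :: r) → G.precededBy m R p := by
    rcases ha with h | h
    · exact ⟨_, h, trivial, fun p r hv => hv.1 ▸ hhead⟩
    · exact ⟨_, h, trivial, fun p r hv => hv.1 ▸ htail⟩
  obtain ⟨l₁, l₂, hsplit⟩ := List.append_of_mem hmv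
  obtain ⟨w, hw⟩ := hL.exists_eq_append_circ hsplit hjump
  have hclosed : G.run L.start (l₁ ++ mv :: l₂) = L.start := hsplit ▸ L.closed
  have hvalid : G.validFrom L.start (l₁ ++ mv :: l₂) := hsplit ▸ L.valid
  have hrot := G.run_rotate hclosed
  rw [Loop.Meets, hsplit, ← G.meetsFrom_rotate m hclosed]
  rw [List.cons_append, hw, ← List.cons_append] at hrot ⊢
  have hsub : mv :: w ++ [.circ] ⊆ L.moves := by
    rw [List.cons_append, ← hw, hsplit]
    exact (List.perm_middle.trans (List.perm_append_comm.cons mv)).symm.subset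
  exact G.meetsFrom_of_precededBy m hrot (hsrc _ _ ((G.validFrom_append _ _ _).1 hvalid).2)
    (hdisj.mono_left (jumpArrows_mono (List.Subset.trans (List.subset_append_left _ _) hsub)))

end Loop

end GaussDiagram

/-- In a positive T-diagram in which every arrow has a well-defined level, every nontrivial
orientation-respecting loop meets at least one marking. -/
theorem stmt11 (n : ℕ) (G : GaussDiagram n) (m : ZMod (2 * n) → ℕ) (hm : ∃ e, 0 < m e)
    (hlev : ∀ a, G.HasLevel m a) :
    ∀ L : GaussDiagram.Loop G, L.Reduced → L.Meets m := by
  intro L hL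
  by_cases hcirc : ∀ mv ∈ L.moves, mv = .circ
  · obtain ⟨e, he⟩ := hm
    exact L.meets_of_forall_circ m hL.1 hcirc he
  · obtain ⟨_, hdisj, a, ha, hhead, htail⟩ :=
      G.exists_precededBy_of_hasLevel m (GaussDiagram.jumpArrows_nonempty hcirc) fun a _ => hlev a
    exact L.meets_of_precededBy m hL ha hdisj hhead htail
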